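/- arXiv:1403.3227 — 5 statements merged into one kernel-verified Lean document; each statement's English description precedes it below -/
import Mathlib

section
/- Let N ≥ 2 be an integer and c a real number. Define the sequence a_n = P_n^{(N-2,0)}(2c-1) / (N+n-1)_n for n ≥ 0 (so that a_0 = 1). Then for every integer p ≥ 0 one has ∑_{n=0}^{p} a_n · C(p,n) · 1/(N+2n)_{p-n} = c^p / p!. -/
/-!
Write `M = N - 2`. The binomial theorem and Vandermonde's identity give the
shifted Jacobi expansion `P_n^{(M,0)}(2c-1) = ∑_j (-1)^(n-j) C(n,j) C(n+M+j,j) c^j`, while the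
Pochhammer factors are ratios of factorials. Comparing coefficients of `c^j` and substituting
`n = j + k`, `p = j + r`, the coefficient of `c^j` on the left is `C(p,j) / j!` times
`∑_k (-1)^k C(r,k) (b+2k+1) (b+k)! / (b+r+k+1)!` with `b = M + 2j`. This sum is `1` for `r = 0`
and telescopes to `0` for `r > 0`.
-/

open Finset Nat

/-- Pochhammer symbol `(a)_m = a (a+1) ⋯ (a+m-1)`. -/
noncomputable def poch (a : ℝ) (m : ℕ) : ℝ := ∏ i ∈ Finset.range m, (a + i)

/-- Jacobi polynomial with nonnegative integer parameters. -/
noncomputable def jacobiP (α β n : ℕ) (x : ℝ) : ℝ :=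
  ∑ m ∈ Finset.range (n + 1),
    (Nat.choose (n + α) (n - m) : ℝ) * (Nat.choose (n + β) m : ℝ) *
      ((x - 1) / 2) ^ m * ((x + 1) / 2) ^ (n - m)

lemma poch_natCast_add_one (b m : ℕ) : poch (b + 1) m = (b + m)! / b ! := by
  rw [eq_div_iff (by positivity), mul_comm, ← factorial_mul_ascFactorial,
    ascFactorial_eq_prod_range, poch]
  push_cast
  simp only [add_assoc, add_comm (1 : ℝ)]

lemma sub_one_pow_mul_pow (c : ℝ) {m n : ℕ} (h : m ≤ n) :
    (c - 1) ^ m * c ^ (n - m) =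
      ∑ j ∈ range (n + 1), (-1) ^ (n - j) * (m.choose (n - j) : ℝ) * c ^ j := by
  have expand : (c - 1) ^ m * c ^ (n - m) =
      ∑ i ∈ range (n + 1), (-1) ^ i * (m.choose i : ℝ) * c ^ (n - i) := by
    rw [← neg_add_eq_sub, add_pow, sum_mul]
    refine (sum_congr rfl fun i hi => ?_).trans
      (sum_subset (range_subset_range.2 (by omega)) fun i _ hi => ?_)
    · rw [mem_range] at hi
      rw [show n - i = m - i + (n - m) by omega, pow_add]
      ring
    · simp [choose_eq_zero_of_lt (show m < i by simpa using hi)]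
  rw [expand, ← sum_range_reflect]
  refine sum_congr rfl fun j hj => ?_
  rw [mem_range] at hj
  rw [show n + 1 - 1 - j = n - j by omega, show n - (n - j) = j by omega]

lemma sum_choose_mul_choose_mul_choose (M n j : ℕ) (hj : j ≤ n) :
    ∑ m ∈ range (n + 1), (n + M).choose (n - m) * n.choose m * m.choose (n - j) =
      n.choose j * (n + M + j).choose j := by
  rw [show n + 1 = (n - j) + (j + 1) by omega, sum_range_add,
    sum_eq_zero fun m hm => by simp [choose_eq_zero_of_lt (mem_range.1 hm)], zero_add,
    show n + M + j = j + (n + M) by omega, add_choose_eq,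
    Nat.sum_antidiagonal_eq_sum_range_succ_mk, mul_sum]
  refine sum_congr rfl fun u hu => ?_
  rw [mem_range] at hu
  have hc := choose_mul (n := n) (k := n - j + u) (s := n - j) (by omega)
  rw [choose_symm hj, show n - (n - j) = j by omega, show n - j + u - (n - j) = u by omega] at hc
  rw [show n - (n - j + u) = j - u by omega, mul_assoc, hc]
  ring

noncomputable def shiftedJacobiCoeff (M n j : ℕ) : ℝ :=
  (-1) ^ (n - j) * n.choose j * (n + M + j).choose j

lemma shiftedJacobiCoeff_of_lt {M n j : ℕ} (h : n < j) : shiftedJacobiCoeff M n j = 0 := by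
  simp [shiftedJacobiCoeff, choose_eq_zero_of_lt h]

lemma jacobiP_two_mul_sub_one (M n : ℕ) (c : ℝ) :
    jacobiP M 0 n (2 * c - 1) = ∑ j ∈ range (n + 1), shiftedJacobiCoeff M n j * c ^ j := by
  have expand : ∀ m ∈ range (n + 1),
      ((n + M).choose (n - m) : ℝ) * ((n + 0).choose m : ℝ) * ((2 * c - 1 - 1) / 2) ^ m *
          ((2 * c - 1 + 1) / 2) ^ (n - m) =
        ∑ j ∈ range (n + 1), (-1) ^ (n - j) * c ^ j *
          (((n + M).choose (n - m) * n.choose m * m.choose (n - j) : ℕ) : ℝ) := by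
    intro m hm
    rw [show (2 * c - 1 - 1) / 2 = c - 1 by ring, show (2 * c - 1 + 1) / 2 = c by ring, add_zero,
      mul_assoc, sub_one_pow_mul_pow c (mem_range_succ_iff.1 hm), mul_sum]
    refine sum_congr rfl fun j _ => ?_
    push_cast
    ring
  rw [jacobiP, sum_congr rfl expand, sum_comm]
  refine sum_congr rfl fun j hj => ?_
  rw [← mul_sum, ← Nat.cast_sum,
    sum_choose_mul_choose_mul_choose M n j (mem_range_succ_iff.1 hj),
    shiftedJacobiCoeff]
  push_cast
  ring

noncomputable def altChooseFactorialSum (b r : ℕ) : ℝ :=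
  ∑ k ∈ range (r + 1),
    (-1) ^ k * (r.choose k : ℝ) * (b + 2 * k + 1) * (b + k)! / (b + r + k + 1)!

lemma altChooseFactorialSum_zero (b : ℕ) : altChooseFactorialSum b 0 = 1 := by
  rw [altChooseFactorialSum, sum_range_one, factorial_succ]
  push_cast
  field_simp
  simp

lemma cast_choose_succ_right_eq {R : Type*} [Ring R] (n k : ℕ) :
    (n.choose (k + 1) : R) * (k + 1) = n.choose k * (n - k) := by
  rcases le_or_gt k n with hk | hk
  · have := congrArg (Nat.cast : ℕ → R) (choose_succ_right_eq n k)
    push_cast [hk] at this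
    exact this
  · simp [choose_eq_zero_of_lt hk, choose_eq_zero_of_lt (show n < k + 1 by omega)]

lemma altChooseFactorialSum_succ (b r : ℕ) : altChooseFactorialSum b (r + 1) = 0 := by
  -- Gosper certificate: the summand is `v k - v (k + 1)`, and `v 0 = v (r + 2) = 0`.
  set v : ℕ → ℝ := fun k =>
    (-1) ^ k * k * ((r + 1).choose k : ℝ) * (b + k)! / ((r + 1) * (b + r + k + 1)!)
  have step : ∀ k, (-1) ^ k * ((r + 1).choose k : ℝ) * (b + 2 * k + 1) * (b + k)! /
      (b + (r + 1 : ℕ) + k + 1)! = v k - v (k + 1) := by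
    intro k
    have h1 : ((b + k + 1)! : ℝ) = (b + k + 1) * (b + k)! := by
      push_cast [factorial_succ]; ring
    have h2 : ((b + (r + 1) + k + 1)! : ℝ) = (b + r + k + 2) * (b + r + k + 1)! := by
      rw [show b + (r + 1) + k + 1 = (b + r + k + 1) + 1 by ring]
      push_cast [factorial_succ]; ring
    have hC : ((r + 1).choose (k + 1) : ℝ) * (k + 1) = (r + 1).choose k * (r + 1 - k) := by
      exact_mod_cast cast_choose_succ_right_eq (r + 1) k
    simp only [v]
    push_cast
    rw [show b + (k + 1) = b + k + 1 by ring,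
      show b + r + (k + 1) + 1 = b + (r + 1) + k + 1 by ring, h1, h2]
    field_simp
    linear_combination -(-1) ^ k * ((b : ℝ) + k + 1) * hC
  rw [altChooseFactorialSum, sum_congr rfl fun k _ => step k, sum_range_sub']
  simp [v, choose_succ_self]

noncomputable def termWeight (M p n : ℕ) : ℝ :=
  p.choose n * (M + n)! * (M + 2 * n + 1) / (M + n + p + 1)!

lemma sum_shiftedJacobiCoeff_mul_termWeight (M j r : ℕ) :
    ∑ n ∈ range (j + r + 1), shiftedJacobiCoeff M n j * termWeight M (j + r) n =
      (j + r).choose j / j ! * altChooseFactorialSum (M + 2 * j) r := by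
  rw [show j + r + 1 = j + (r + 1) by ring, sum_range_add,
    sum_eq_zero fun n hn => by simp [shiftedJacobiCoeff_of_lt (mem_range.1 hn)], zero_add,
    altChooseFactorialSum, mul_sum]
  refine sum_congr rfl fun k _ => ?_
  have hchoose :
      ((j + r).choose (j + k) : ℝ) * (j + k).choose j = (j + r).choose j * r.choose k := by
    have := choose_mul (n := j + r) (le_add_right j k)
    rw [Nat.add_sub_cancel_left, Nat.add_sub_cancel_left] at this
    exact_mod_cast this
  have hfact : ((M + 2 * j + k).choose j : ℝ) * j ! * (M + j + k)! = (M + 2 * j + k)! := by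
    have := choose_mul_factorial_mul_factorial (show j ≤ M + 2 * j + k by omega)
    rw [show M + 2 * j + k - j = M + j + k by omega] at this
    exact_mod_cast this
  rw [shiftedJacobiCoeff, termWeight, Nat.add_sub_cancel_left,
    show j + k + M + j = M + 2 * j + k by ring,
    show M + (j + k) + (j + r) + 1 = M + 2 * j + r + k + 1 by ring,
    show M + (j + k) = M + j + k by ring]
  have : (j ! : ℝ) ≠ 0 := by positivity
  have : ((M + 2 * j + r + k + 1)! : ℝ) ≠ 0 := by positivity
  field_simp
  push_cast
  linear_combination ((M : ℝ) + 2 * j + 2 * k + 1) *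
    (((j + k).choose j : ℝ) * (j + r).choose (j + k) * hfact + ((M + 2 * j + k)! : ℝ) * hchoose)

lemma sum_shiftedJacobiCoeff_mul_termWeight_eq_ite (M p j : ℕ) (hj : j ≤ p) :
    ∑ n ∈ range (p + 1), shiftedJacobiCoeff M n j * termWeight M p n =
      if j = p then 1 / (p ! : ℝ) else 0 := by
  obtain ⟨r, rfl⟩ := Nat.exists_eq_add_of_le hj
  rw [sum_shiftedJacobiCoeff_mul_termWeight]
  cases r with
  | zero => simp [altChooseFactorialSum_zero]
  | succ r => simp [altChooseFactorialSum_succ]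

lemma jacobiP_div_poch_mul_choose_div_poch (M p n : ℕ) (hn : n ≤ p) (x : ℝ) :
    jacobiP M 0 n x / poch ((M + 2 : ℕ) + n - 1) n * p.choose n *
        (1 / poch ((M + 2 : ℕ) + 2 * n) (p - n)) =
      jacobiP M 0 n x * termWeight M p n := by
  rw [show ((M + 2 : ℕ) : ℝ) + n - 1 = (M + n : ℕ) + 1 by push_cast; ring,
    show ((M + 2 : ℕ) : ℝ) + 2 * n = (M + 2 * n + 1 : ℕ) + 1 by push_cast; ring,
    poch_natCast_add_one, poch_natCast_add_one, show M + n + n = M + 2 * n by ring,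
    show M + 2 * n + 1 + (p - n) = M + n + p + 1 by omega, factorial_succ (M + 2 * n), termWeight]
  have : ((M + 2 * n)! : ℝ) ≠ 0 := by positivity
  field_simp
  push_cast
  ring

/-- The sequence `a_n = P_n^{(N-2,0)}(2c-1) / (N+n-1)_n` solves the recursive system
`∑_{n=0}^p a_n C(p,n) / (N+2n)_{p-n} = c^p / p!`. -/
theorem stmt_0 (N : ℕ) (hN : 2 ≤ N) (c : ℝ) (p : ℕ) :
    ∑ n ∈ Finset.range (p + 1),
      (jacobiP (N - 2) 0 n (2 * c - 1) / poch ((N : ℝ) + n - 1) n) *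
        (Nat.choose p n : ℝ) * (1 / poch ((N : ℝ) + 2 * n) (p - n)) =
      c ^ p / (Nat.factorial p : ℝ) := by
  obtain ⟨M, rfl⟩ : ∃ M, N = M + 2 := ⟨N - 2, by omega⟩
  have hterm : ∀ n ∈ range (p + 1),
      jacobiP (M + 2 - 2) 0 n (2 * c - 1) / poch ((M + 2 : ℕ) + n - 1) n * p.choose n *
          (1 / poch ((M + 2 : ℕ) + 2 * n) (p - n)) =
        ∑ j ∈ range (p + 1), shiftedJacobiCoeff M n j * termWeight M p n * c ^ j := by
    intro n hn
    rw [mem_range_succ_iff] at hn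
    rw [Nat.add_sub_cancel, jacobiP_div_poch_mul_choose_div_poch M p n hn,
      jacobiP_two_mul_sub_one, sum_mul]
    refine (sum_subset (range_subset_range.2 (by omega)) fun j _ hj => ?_).trans
      (sum_congr rfl fun j _ => by ring)
    simp [shiftedJacobiCoeff_of_lt (show n < j by simpa using hj)]
  rw [sum_congr rfl hterm, sum_comm]
  simp_rw [← sum_mul]
  rw [sum_congr rfl fun j hj => by
    rw [sum_shiftedJacobiCoeff_mul_termWeight_eq_ite M p j (mem_range_succ_iff.1 hj)]]
  simp [div_eq_inv_mul]
end

section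
/- Let N ≥ 2 and n ≥ 0 be integers and λ a real number. Then ∫_0^1 λ^n e^{λu} u^n (1-u)^{N+n-2} du = (-1)^n · n! · ∫_0^1 e^{λu} (1-u)^{N-2} P_n^{(0,N-2)}(1-2u) du. -/
open Polynomial
open scoped Nat

theorem integral_mul_iteratedDeriv_eq_neg_one_pow_mul {f g : ℝ → ℝ} {a b : ℝ} (n : ℕ)
    (hf : ContDiff ℝ n f) (hg : ContDiff ℝ n g)
    (ha : ∀ k < n, iteratedDeriv k f a = 0) (hb : ∀ k < n, iteratedDeriv k f b = 0) :
    ∫ x in a..b, f x * iteratedDeriv n g x =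
      (-1) ^ n * ∫ x in a..b, iteratedDeriv n f x * g x := by
  induction n generalizing f with
  | zero => simp
  | succ n ih =>
    push_cast at hf hg
    have hfa : f a = 0 := by simpa using ha 0 n.succ_pos
    have hfb : f b = 0 := by simpa using hb 0 n.succ_pos
    have hf' : Differentiable ℝ f := hf.differentiable (by simp)
    have hgn' : Differentiable ℝ (iteratedDeriv n g) := hg.differentiable_iteratedDeriv' n
    have hparts := intervalIntegral.integral_mul_deriv_eq_deriv_mul (a := a) (b := b)
      (fun x _ => (hf' x).hasDerivAt) (fun x _ => (hgn' x).hasDerivAt)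
      (hf.deriv'.continuous.intervalIntegrable a b)
      (by rw [← iteratedDeriv_succ]; exact (hg.continuous_iteratedDeriv' _).intervalIntegrable ..)
    rw [← iteratedDeriv_succ, hfa, hfb] at hparts
    have hderiv := ih hf.deriv' (hg.of_le (by norm_cast; omega))
      (fun k hk => by rw [← iteratedDeriv_succ']; exact ha _ (by omega))
      (fun k hk => by rw [← iteratedDeriv_succ']; exact hb _ (by omega))
    rw [hparts, hderiv, iteratedDeriv_succ']
    ring

theorem Polynomial.iteratedDeriv_eval {𝕜 : Type*} [NontriviallyNormedField 𝕜] (p : 𝕜[X])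
    (k : ℕ) : iteratedDeriv k (fun x => p.eval x) = fun x => (derivative^[k] p).eval x := by
  induction k generalizing p with
  | zero => simp
  | succ k ih =>
    rw [iteratedDeriv_succ', Function.iterate_succ_apply, ← ih]
    congr 1
    funext x
    exact p.deriv

theorem Polynomial.eval_iterate_derivative_eq_zero_of_pow_dvd {R : Type*} [CommRing R]
    {p : R[X]} {t : R} {n k : ℕ} (h : (X - C t) ^ n ∣ p) (hk : k < n) :
    (derivative^[k] p).eval t = 0 := by
  obtain ⟨q, hq⟩ := pow_sub_dvd_iterate_derivative_of_pow_dvd k h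
  rw [hq, eval_mul, eval_pow, eval_sub, eval_X, eval_C, sub_self, zero_pow (by omega), zero_mul]

theorem X_pow_mul_one_sub_X_pow_dvd {R : Type*} [CommRing R] (n β : ℕ) :
    (X - C 0) ^ n ∣ (X ^ n * (1 - X) ^ (n + β) : R[X]) ∧
      (X - C 1) ^ n ∣ (X ^ n * (1 - X) ^ (n + β) : R[X]) := by
  refine ⟨by simp, dvd_mul_of_dvd_right ?_ _⟩
  exact (pow_dvd_pow _ (Nat.le_add_right n β)).trans (pow_dvd_pow_of_dvd ⟨-1, by simp⟩ _)

theorem Nat.choose_mul_descFactorial_mul_descFactorial {n k : ℕ} (m : ℕ) (hk : k ≤ n) :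
    n.choose k * n.descFactorial (n - k) * m.descFactorial k =
      n ! * n.choose (n - k) * m.choose k := by
  rw [Nat.descFactorial_eq_factorial_mul_choose m k, Nat.choose_symm hk,
    ← Nat.factorial_mul_descFactorial (Nat.sub_le n k), Nat.sub_sub_self hk]
  ring

theorem eval_iterate_derivative_X_pow_mul_one_sub_X_pow (n β : ℕ) (u : ℝ) :
    (derivative^[n] (X ^ n * (1 - X) ^ (n + β) : ℝ[X])).eval u =
      n ! * (1 - u) ^ β * jacobiP 0 β n (1 - 2 * u) := by
  have hcomp : ((1 - X) ^ (n + β) : ℝ[X]) = (X ^ (n + β)).comp (1 - X) := by simp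
  rw [hcomp, iterate_derivative_mul, eval_finsetSum, jacobiP, Finset.mul_sum]
  refine Finset.sum_congr rfl fun k hk => ?_
  have hkn : k ≤ n := Nat.lt_succ_iff.mp (Finset.mem_range.mp hk)
  have hcoeff := congrArg (Nat.cast : ℕ → ℝ)
    (Nat.choose_mul_descFactorial_mul_descFactorial (n + β) hkn)
  push_cast at hcoeff
  simp only [iterate_derivative_comp_one_sub_X, iterate_derivative_X_pow_eq_C_mul, nsmul_eq_mul,
    eval_mul, eval_natCast, eval_C, eval_pow, eval_X, eval_neg, eval_one, eval_comp, eval_sub,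
    Nat.sub_sub_self hkn, add_zero]
  rw [show n + β - k = β + (n - k) by omega, pow_add, show (1 - 2 * u - 1) / 2 = -u by ring,
    show (1 - 2 * u + 1) / 2 = 1 - u by ring, neg_pow]
  linear_combination ((-1) ^ k * u ^ k * (1 - u) ^ β * (1 - u) ^ (n - k)) * hcoeff

/-- `∫_0^1 λ^n e^{λu} u^n (1-u)^{N+n-2} du
    = (-1)^n n! ∫_0^1 e^{λu} (1-u)^{N-2} P_n^{(0,N-2)}(1-2u) du`. -/
theorem stmt_6 (N : ℕ) (hN : 2 ≤ N) (n : ℕ) (l : ℝ) :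
    ∫ u in (0 : ℝ)..1, l ^ n * Real.exp (l * u) * u ^ n * (1 - u) ^ (N + n - 2) =
      (-1 : ℝ) ^ n * (Nat.factorial n : ℝ) *
        ∫ u in (0 : ℝ)..1, Real.exp (l * u) * (1 - u) ^ (N - 2) *
          jacobiP 0 (N - 2) n (1 - 2 * u) := by
  set p : ℝ[X] := X ^ n * (1 - X) ^ (n + (N - 2))
  have hvanish (t : ℝ) (ht : (X - C t) ^ n ∣ p) (k : ℕ) (hk : k < n) :
      iteratedDeriv k (fun x => p.eval x) t = 0 := by
    rw [p.iteratedDeriv_eval]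
    exact eval_iterate_derivative_eq_zero_of_pow_dvd ht hk
  obtain ⟨hdvd₀, hdvd₁⟩ := X_pow_mul_one_sub_X_pow_dvd (R := ℝ) n (N - 2)
  have hparts :=
    integral_mul_iteratedDeriv_eq_neg_one_pow_mul (g := fun u => Real.exp (l * u)) n
      (by simpa using p.contDiff_aeval (𝕜 := ℝ) n) (by fun_prop)
      (hvanish 0 hdvd₀) (hvanish 1 hdvd₁)
  simp only [iteratedDeriv_exp_const_mul, p.iteratedDeriv_eval, p,
    eval_iterate_derivative_X_pow_mul_one_sub_X_pow] at hparts
  rw [mul_assoc, ← intervalIntegral.integral_const_mul]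
  convert hparts using 1
  · refine intervalIntegral.integral_congr fun u _ => ?_
    simp only [eval_mul, eval_pow, eval_X, eval_sub, eval_one,
      show N + n - 2 = n + (N - 2) by omega]
    ring
  · congr 1
    refine intervalIntegral.integral_congr fun u _ => ?_
    ring
end

section
/- Let N ≥ 2 and 1 ≤ k ≤ N-1 be integers and let s_k(u) = (1-u_1-⋯-u_k)^{N-k-1} for u ∈ ℝ^k. Then for every u in the open simplex Σ_k: k(N-k-1)·s_k(u) + ∑_{i=1}^k (1+(N-2k-2)u_i)·∂_i s_k(u) + ∑_{i=1}^k u_i(1-u_i)·∂_{ii} s_k(u) − ∑_{i≠j} u_i u_j·∂_{ij} s_k(u) = 0, where ∂_i, ∂_{ii}, ∂_{ij} denote the first and second partial derivatives with respect to the coordinates of u. -/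
/-!
Every partial derivative of `s = (1 - ∑ uᵢ)^n`, `n = N - k - 1`, is independent of the direction:
`∂ᵢs = -n P^(n-1)` and `∂ᵢ∂ⱼs = n(n-1) P^(n-2)` with `P = 1 - ∑ uᵢ`. The operator therefore only
sees `S = ∑ uᵢ` and `∑ uᵢ²`; the latter cancels between the diagonal and off-diagonal second-order
terms, and what remains, `n P^(n-1) (k P - k + k S)`, vanishes because `P = 1 - S`.
-/

noncomputable def pd {k : ℕ} (f : (Fin k → ℝ) → ℝ) (i : Fin k) (u : Fin k → ℝ) : ℝ :=
  fderiv ℝ f u (Pi.single i 1)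

def stdSimplex' (k : ℕ) : Set (Fin k → ℝ) :=
  {u | (∀ i, 0 < u i) ∧ ∑ i, u i < 1}

lemma pd_const_mul_one_sub_sum_pow {k : ℕ} (c : ℝ) (n : ℕ) (i : Fin k) (u : Fin k → ℝ) :
    pd (fun v => c * (1 - ∑ m, v m) ^ n) i u = -(c * n) * (1 - ∑ m, u m) ^ (n - 1) := by
  have hsum : HasFDerivAt (fun v : Fin k → ℝ => ∑ m, v m)
      (∑ m, ContinuousLinearMap.proj (R := ℝ) (φ := fun _ : Fin k => ℝ) m) u :=
    HasFDerivAt.fun_sum fun m _ => hasFDerivAt_apply m u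
  rw [pd, ((hsum.const_sub 1).pow n |>.const_mul c).fderiv]
  simp
  ring

lemma pd_one_sub_sum_pow {k : ℕ} (n : ℕ) (i : Fin k) (u : Fin k → ℝ) :
    pd (fun v => (1 - ∑ m, v m) ^ n) i u = -(n : ℝ) * (1 - ∑ m, u m) ^ (n - 1) := by
  simpa using pd_const_mul_one_sub_sum_pow 1 n i u

lemma pd_pd_one_sub_sum_pow {k : ℕ} (n : ℕ) (i j : Fin k) (u : Fin k → ℝ) :
    pd (pd (fun v => (1 - ∑ m, v m) ^ n) j) i u =
      (n : ℝ) * (n - 1) * (1 - ∑ m, u m) ^ (n - 2) := by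
  simp only [funext (pd_one_sub_sum_pow n j), pd_const_mul_one_sub_sum_pow]
  rcases n with _ | n
  · simp
  · simp; ring

lemma Finset.sum_sum_ite_ne {ι M : Type*} [Fintype ι] [DecidableEq ι] [AddCommGroup M]
    (f : ι → ι → M) :
    ∑ i, ∑ j, (if i ≠ j then f i j else 0) = ∑ i, ∑ j, f i j - ∑ i, f i i := by
  rw [← Finset.sum_sub_distrib]
  refine Finset.sum_congr rfl fun i _ => ?_
  rw [← Finset.sum_filter, Finset.filter_ne, Finset.sum_erase_eq_sub (Finset.mem_univ i)]

lemma natCast_mul_pow_eq {R : Type*} [CommSemiring R] (n : ℕ) (x : R) :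
    (n : R) * x ^ n = x * (n * x ^ (n - 1)) := by
  rcases n with _ | n <;> simp; ring

lemma natCast_mul_sub_one_mul_pow_sub_two {R : Type*} [CommRing R] (n : ℕ) (x : R) :
    (n : R) * (n - 1) * x ^ (n - 2) * x = (n - 1) * (n * x ^ (n - 1)) := by
  rcases n with _ | _ | n <;> simp; ring

theorem stmt_9_general (N k : ℕ) (hN : 2 ≤ N) (hk2 : k ≤ N - 1)
    (u : Fin k → ℝ) :
    (k : ℝ) * ((N : ℝ) - k - 1) * (1 - ∑ i, u i) ^ (N - k - 1) +
        (∑ i, (1 + ((N : ℝ) - 2 * k - 2) * u i) *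
          pd (fun v => (1 - ∑ m, v m) ^ (N - k - 1)) i u) +
        (∑ i, u i * (1 - u i) *
          pd (pd (fun v => (1 - ∑ m, v m) ^ (N - k - 1)) i) i u) -
        (∑ i, ∑ j, if i ≠ j then
          u i * u j * pd (pd (fun v => (1 - ∑ m, v m) ^ (N - k - 1)) j) i u else 0) = 0 := by
  set n := N - k - 1
  have hn : (n : ℝ) = N - k - 1 := by
    rw [Nat.cast_sub (show 1 ≤ N - k by omega), Nat.cast_sub (show k ≤ N by omega), Nat.cast_one]
  simp only [pd_one_sub_sum_pow, pd_pd_one_sub_sum_pow, Finset.sum_sum_ite_ne]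
  simp only [← Finset.sum_mul, ← Finset.mul_sum, Finset.sum_add_distrib, Finset.sum_sub_distrib,
    mul_sub, add_mul, sub_mul, mul_one, Finset.sum_const, Finset.card_univ,
    Fintype.card_fin, nsmul_eq_mul]
  set S := ∑ i, u i
  linear_combination (k : ℝ) * natCast_mul_pow_eq n (1 - S)
    + S * natCast_mul_sub_one_mul_pow_sub_two n (1 - S)
    - ((k : ℝ) * (1 - S) ^ n - S * (n * (1 - S) ^ (n - 1))) * hn

/-- The Dirichlet density `s_k(u) = (1-u_1-⋯-u_k)^{N-k-1}` is annihilated on the simplex by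
`k(N-k-1) + ∑_i (1+(N-2k-2)u_i)∂_i + ∑_i u_i(1-u_i)∂_{ii} - ∑_{i≠j} u_i u_j ∂_{ij}`. -/
theorem stmt_9 (N k : ℕ) (hN : 2 ≤ N) (hk1 : 1 ≤ k) (hk2 : k ≤ N - 1)
    (u : Fin k → ℝ) (hu : u ∈ stdSimplex' k) :
    (k : ℝ) * ((N : ℝ) - k - 1) * (1 - ∑ i, u i) ^ (N - k - 1) +
        (∑ i, (1 + ((N : ℝ) - 2 * k - 2) * u i) *
          pd (fun v => (1 - ∑ m, v m) ^ (N - k - 1)) i u) +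
        (∑ i, u i * (1 - u i) *
          pd (pd (fun v => (1 - ∑ m, v m) ^ (N - k - 1)) i) i u) -
        (∑ i, ∑ j, if i ≠ j then
          u i * u j * pd (pd (fun v => (1 - ∑ m, v m) ^ (N - k - 1)) j) i u else 0) = 0 :=
  stmt_9_general N k hN hk2 u
end

section
/- Let N ≥ 3 be an integer and let g : [0,∞)×[0,1] → ℝ be smooth (i.e. extend to a C^∞ function on an open neighborhood of [0,∞)×[0,1]). Set f(t,u) = g(t,u)·(1-u)^{N-2} and φ(t,λ) = ∫_0^1 e^{λu} f(t,u) du for t ≥ 0 and λ ∈ ℝ. Suppose that for all t > 0 and all λ ∈ ℝ: ∂_t φ(t,λ) = λ·φ(t,λ) + (λ² − Nλ)·∂_λ φ(t,λ) − λ²·∂_λ² φ(t,λ). Then for all t > 0 and all u ∈ (0,1): ∂_t g(t,u) = u(1-u)·∂_u² g(t,u) + (1 − Nu)·∂_u g(t,u). -/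
open MeasureTheory intervalIntegral Real Set Metric

/-- Differentiation under the integral sign for `l ↦ ∫₀¹ e^{lu} c(u) du`. -/
lemma lap_hasDerivAt (c : ℝ → ℝ) (hc : ContinuousOn c (Set.Icc 0 1)) (l : ℝ) :
    HasDerivAt (fun l => ∫ u in (0:ℝ)..1, Real.exp (l * u) * c u)
      (∫ u in (0:ℝ)..1, Real.exp (l * u) * (u * c u)) l := by
  obtain ⟨M, hM⟩ := (isCompact_Icc (a := (0:ℝ)) (b := 1)).exists_bound_of_continuousOn hc
  have hIoc : Set.uIoc (0:ℝ) 1 = Set.Ioc 0 1 := by rw [Set.uIoc_of_le zero_le_one]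
  have hIcc : Set.uIcc (0:ℝ) 1 = Set.Icc 0 1 := by rw [Set.uIcc_of_le zero_le_one]
  have meas : ∀ x : ℝ, AEStronglyMeasurable (fun u => Real.exp (x * u) * c u)
      (volume.restrict (Set.uIoc (0:ℝ) 1)) := by
    intro x
    rw [hIoc]
    exact (((Real.continuous_exp.comp (continuous_const.mul continuous_id)).continuousOn.mul
      (hc.mono Set.Ioc_subset_Icc_self))).aestronglyMeasurable measurableSet_Ioc
  have meas' : AEStronglyMeasurable (fun u => Real.exp (l * u) * (u * c u))
      (volume.restrict (Set.uIoc (0:ℝ) 1)) := by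
    rw [hIoc]
    exact ((Real.continuous_exp.comp (continuous_const.mul continuous_id)).continuousOn.mul
      (continuous_id.continuousOn.mul (hc.mono Set.Ioc_subset_Icc_self))).aestronglyMeasurable
      measurableSet_Ioc
  have hint : IntervalIntegrable (fun u => Real.exp (l * u) * c u) volume 0 1 := by
    apply ContinuousOn.intervalIntegrable
    rw [hIcc]
    exact (Real.continuous_exp.comp (continuous_const.mul continuous_id)).continuousOn.mul hc
  have key := intervalIntegral.hasDerivAt_integral_of_dominated_loc_of_deriv_le
    (F := fun x u => Real.exp (x * u) * c u)
    (F' := fun x u => Real.exp (x * u) * (u * c u))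
    (bound := fun _ => Real.exp (|l| + 1) * M)
    (a := 0) (b := 1) (x₀ := l) (μ := volume) (s := Metric.ball l 1) (Metric.ball_mem_nhds l one_pos)
    (Filter.Eventually.of_forall meas) hint meas' ?_ ?_ ?_
  · exact key.2
  · refine Filter.Eventually.of_forall fun u hu x hx => ?_
    rw [hIoc] at hu
    have hu1 : u ∈ Set.Icc (0:ℝ) 1 := Set.Ioc_subset_Icc_self hu
    have h1 : |Real.exp (x * u)| ≤ Real.exp (|l| + 1) := by
      rw [abs_of_pos (Real.exp_pos _)]
      apply Real.exp_le_exp.2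
      calc x * u ≤ |x * u| := le_abs_self _
        _ = |x| * |u| := abs_mul _ _
        _ ≤ |x| * 1 := by
            apply mul_le_mul_of_nonneg_left _ (abs_nonneg x)
            rw [abs_of_nonneg hu1.1]; exact hu1.2
        _ ≤ |l| + 1 := by
            have := mem_ball_iff_norm.1 hx
            have : |x - l| < 1 := this
            calc |x| * 1 = |x| := mul_one _
              _ = |l + (x - l)| := by ring_nf
              _ ≤ |l| + |x - l| := abs_add_le _ _
              _ ≤ |l| + 1 := by linarith
    have h2 : |u * c u| ≤ M := by
      rw [abs_mul]
      calc |u| * |c u| ≤ 1 * M := by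
            apply mul_le_mul
            · rw [abs_of_nonneg hu1.1]; exact hu1.2
            · exact hM u hu1
            · exact abs_nonneg _
            · exact zero_le_one
        _ = M := one_mul M
    calc ‖Real.exp (x * u) * (u * c u)‖ = |Real.exp (x * u)| * |u * c u| := abs_mul _ _
      _ ≤ Real.exp (|l| + 1) * M := by
          apply mul_le_mul h1 h2 (abs_nonneg _) (le_of_lt (Real.exp_pos _))
  · exact intervalIntegrable_const
  · refine Filter.Eventually.of_forall fun u _ x _ => ?_
    have : HasDerivAt (fun x : ℝ => Real.exp (x * u)) (Real.exp (x * u) * u) x := by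
      have h0 : HasDerivAt (fun x : ℝ => x * u) u x := by
        simpa using (hasDerivAt_id x).mul_const u
      simpa using h0.exp
    simpa [mul_assoc, mul_comm, mul_left_comm] using this.mul_const (c u)

/-- If all Laplace transform values of a continuous function vanish, it vanishes on `(0,1)`. -/
lemma lap_zero (h : ℝ → ℝ) (hc : ContinuousOn h (Set.Icc 0 1))
    (h0 : ∀ l : ℝ, ∫ u in (0:ℝ)..1, Real.exp (l * u) * h u = 0) :
    ∀ u ∈ Set.Ioo (0:ℝ) 1, h u = 0 := by
  have hIcc : Set.uIcc (0:ℝ) 1 = Set.Icc 0 1 := by rw [Set.uIcc_of_le zero_le_one]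
  -- step 1: all "exponential moments" vanish
  have mom : ∀ n : ℕ, ∀ l : ℝ, ∫ u in (0:ℝ)..1, Real.exp (l * u) * (u ^ n * h u) = 0 := by
    intro n
    induction n with
    | zero => intro l; simpa using h0 l
    | succ n ih =>
      intro l
      have hcn : ContinuousOn (fun u : ℝ => u ^ n * h u) (Set.Icc 0 1) :=
        (continuous_pow n).continuousOn.mul hc
      have hd := lap_hasDerivAt (fun u => u ^ n * h u) hcn l
      have hzero : (fun l => ∫ u in (0:ℝ)..1, Real.exp (l * u) * (u ^ n * h u)) =
          fun _ : ℝ => (0:ℝ) := funext fun l => ih l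
      rw [hzero] at hd
      have h2 := hd.deriv
      rw [deriv_const] at h2
      have e : (∫ u in (0:ℝ)..1, Real.exp (l * u) * (u ^ (n+1) * h u)) =
          ∫ u in (0:ℝ)..1, Real.exp (l * u) * (u * (u ^ n * h u)) :=
        intervalIntegral.integral_congr fun u _ => by ring
      rw [e]
      exact h2.symm
  -- step 2: polynomial moments vanish
  have momn : ∀ n : ℕ, ∫ u in (0:ℝ)..1, u ^ n * h u = 0 := by
    intro n
    have := mom n 0
    simpa using this
  have polymom : ∀ p : Polynomial ℝ, ∫ u in (0:ℝ)..1, p.eval u * h u = 0 := by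
    intro p
    have : ∀ u : ℝ, p.eval u * h u =
        ∑ i ∈ Finset.range (p.natDegree + 1), p.coeff i * (u ^ i * h u) := by
      intro u
      rw [Polynomial.eval_eq_sum_range, Finset.sum_mul]
      congr 1; ext i; ring
    rw [intervalIntegral.integral_congr (g := fun u =>
        ∑ i ∈ Finset.range (p.natDegree + 1), p.coeff i * (u ^ i * h u))
        (fun u _ => this u)]
    rw [intervalIntegral.integral_finset_sum]
    · apply Finset.sum_eq_zero
      intro i _
      rw [intervalIntegral.integral_const_mul, momn i, mul_zero]
    · intro i _
      apply ContinuousOn.intervalIntegrable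
      rw [hIcc]
      exact continuous_const.continuousOn.mul ((continuous_pow i).continuousOn.mul hc)
  -- step 3: ∫ h² = 0
  have hsq : ∫ u in (0:ℝ)..1, h u * h u = 0 := by
    obtain ⟨M, hM⟩ := (isCompact_Icc (a := (0:ℝ)) (b := 1)).exists_bound_of_continuousOn hc
    have hMnn : 0 ≤ M := le_trans (norm_nonneg _) (hM 0 (by norm_num))
    have key : ∀ ε : ℝ, 0 < ε → |∫ u in (0:ℝ)..1, h u * h u| ≤ ε * M := by
      intro ε hε
      obtain ⟨p, hp⟩ := exists_polynomial_near_of_continuousOn 0 1 h hc ε hε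
      have split : (∫ u in (0:ℝ)..1, h u * h u) =
          (∫ u in (0:ℝ)..1, (h u - p.eval u) * h u) + ∫ u in (0:ℝ)..1, p.eval u * h u := by
        rw [← intervalIntegral.integral_add]
        · apply intervalIntegral.integral_congr
          intro u _; ring
        · apply ContinuousOn.intervalIntegrable
          rw [hIcc]
          exact (hc.sub p.continuous_aeval.continuousOn).mul hc
        · apply ContinuousOn.intervalIntegrable
          rw [hIcc]
          exact p.continuous_aeval.continuousOn.mul hc
      rw [split, polymom p, add_zero]
      have := intervalIntegral.norm_integral_le_of_norm_le_const
        (C := ε * M) (f := fun u => (h u - p.eval u) * h u) (a := 0) (b := 1) ?_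
      · simpa using this
      · intro u hu
        rw [Set.uIoc_of_le zero_le_one] at hu
        have hu1 : u ∈ Set.Icc (0:ℝ) 1 := Set.Ioc_subset_Icc_self hu
        have h1 : |h u - p.eval u| ≤ ε := by
          rw [abs_sub_comm]; exact le_of_lt (hp u hu1)
        calc ‖(h u - p.eval u) * h u‖ = |h u - p.eval u| * |h u| := abs_mul _ _
          _ ≤ ε * M := mul_le_mul h1 (hM u hu1) (abs_nonneg _) (le_of_lt hε)
    by_contra hne
    have habs : 0 < |∫ u in (0:ℝ)..1, h u * h u| := abs_pos.2 hne
    rcases eq_or_lt_of_le hMnn with hM0 | hM0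
    · have := key 1 one_pos
      rw [← hM0, mul_zero] at this
      linarith
    · have := key (|∫ u in (0:ℝ)..1, h u * h u| / (2 * M)) (by positivity)
      rw [div_mul_eq_mul_div, mul_comm] at this
      have heq : M * |∫ u in (0:ℝ)..1, h u * h u| / (2 * M) =
          |∫ u in (0:ℝ)..1, h u * h u| / 2 := by
        field_simp
      rw [heq] at this
      linarith
  -- step 4: h = 0 on Ioo
  intro u₀ hu₀
  by_contra hne
  have hca : ContinuousAt h u₀ := by
    have : Set.Icc (0:ℝ) 1 ∈ nhds u₀ := Icc_mem_nhds hu₀.1 hu₀.2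
    exact hc.continuousAt this
  obtain ⟨δ, hδ, hball⟩ := Metric.continuousAt_iff.1 hca (|h u₀| / 2) (by positivity)
  set a' := max 0 (u₀ - δ / 2) with ha'
  set b' := min 1 (u₀ + δ / 2) with hb'
  have hab : a' < u₀ ∧ u₀ < b' := by
    constructor
    · apply max_lt hu₀.1 (by linarith)
    · apply lt_min hu₀.2 (by linarith)
  have hsub : Set.Ioo a' b' ⊆ Set.Icc 0 1 :=
    fun x hx => ⟨le_trans (le_max_left _ _) (le_of_lt hx.1), le_trans (le_of_lt hx.2) (min_le_left _ _)⟩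
  have hpos : ∀ x ∈ Set.Ioo a' b', 0 < h x * h x := by
    intro x hx
    apply mul_self_pos.2
    have hd1 : dist x u₀ < δ := by
      rw [Real.dist_eq, abs_sub_lt_iff]
      constructor
      · have := hx.2; have := min_le_right (1:ℝ) (u₀ + δ / 2); linarith [lt_of_lt_of_le hx.2 (min_le_right (1:ℝ) (u₀ + δ/2))]
      · have := lt_of_le_of_lt (le_max_right (0:ℝ) (u₀ - δ/2)) hx.1; linarith
    have := hball hd1
    rw [Real.dist_eq] at this
    intro hzero
    rw [hzero] at this
    rw [zero_sub, abs_neg] at this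
    have := abs_pos.2 hne
    linarith
  have hint2 : IntervalIntegrable (fun u => h u * h u) volume a' b' := by
    apply ContinuousOn.intervalIntegrable
    rw [Set.uIcc_of_le (le_of_lt (lt_trans hab.1 hab.2))]
    exact (hc.mono (Set.Icc_subset_Icc (le_max_left _ _) (min_le_left _ _))).mul
      (hc.mono (Set.Icc_subset_Icc (le_max_left _ _) (min_le_left _ _)))
  have hposint : 0 < ∫ u in a'..b', h u * h u :=
    intervalIntegral_pos_of_pos_on hint2 hpos (lt_trans hab.1 hab.2)
  have hmono : (∫ u in a'..b', h u * h u) ≤ ∫ u in (0:ℝ)..1, h u * h u := by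
    apply intervalIntegral.integral_mono_interval (le_max_left _ _)
      (le_of_lt (lt_trans hab.1 hab.2)) (min_le_left _ _)
    · filter_upwards with x
      simpa using mul_self_nonneg (h x)
    · apply ContinuousOn.intervalIntegrable
      rw [Set.uIcc_of_le zero_le_one]
      exact hc.mul hc
  rw [hsq] at hmono
  linarith

set_option maxHeartbeats 2000000 in
/-- If the Laplace transform `φ(t,λ) = ∫_0^1 e^{λu} g(t,u) (1-u)^{N-2} du` satisfies the
Nechita–Pellegrini pde, then `g` solves the heat equation of the Jacobi operator
`u(1-u)∂_u² + (1-Nu)∂_u` on `(0,1)`. -/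
theorem stmt_12 (N : ℕ) (hN : 3 ≤ N) (g : ℝ → ℝ → ℝ)
    (U : Set (ℝ × ℝ)) (hU : IsOpen U)
    (hUs : Set.Ici (0 : ℝ) ×ˢ Set.Icc (0 : ℝ) 1 ⊆ U)
    (hg : ContDiffOn ℝ (⊤ : ℕ∞) (Function.uncurry g) U)
    (φ : ℝ → ℝ → ℝ)
    (hφ : ∀ t l, φ t l = ∫ u in (0 : ℝ)..1, Real.exp (l * u) * (g t u * (1 - u) ^ (N - 2)))
    (hpde : ∀ t > (0 : ℝ), ∀ l : ℝ,
      deriv (fun s => φ s l) t =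
        l * φ t l + (l ^ 2 - (N : ℝ) * l) * deriv (φ t) l - l ^ 2 * deriv (deriv (φ t)) l) :
    ∀ t > (0 : ℝ), ∀ u ∈ Set.Ioo (0 : ℝ) 1,
      deriv (fun s => g s u) t =
        u * (1 - u) * deriv (deriv (g t)) u + (1 - (N : ℝ) * u) * deriv (g t) u := by
  intro t ht u₀ hu₀
  obtain ⟨M, rfl⟩ : ∃ M, N = M + 3 := ⟨N - 3, by omega⟩
  simp only [show M + 3 - 2 = M + 1 from rfl] at hφ
  -- the open slice through t
  set V : Set ℝ := {u | (t, u) ∈ U} with hV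
  have hVopen : IsOpen V := hU.preimage (Continuous.prodMk_right t)
  have hVIcc : Set.Icc (0:ℝ) 1 ⊆ V := fun u hu => hUs ⟨le_of_lt ht, hu⟩
  -- smoothness of the slice
  have hGsmooth : ContDiffOn ℝ (⊤ : ℕ∞) (g t) V := by
    intro u hu
    have h1 : ContDiffAt ℝ (⊤ : ℕ∞) (Function.uncurry g) (t, u) := hg.contDiffAt (hU.mem_nhds hu)
    have h2 : ContDiffAt ℝ (⊤ : ℕ∞) (fun u : ℝ => (t, u)) u := contDiffAt_const.prodMk contDiffAt_id
    exact (h1.comp u h2).contDiffWithinAt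
  set G1 : ℝ → ℝ := deriv (g t) with hG1def
  set G2 : ℝ → ℝ := deriv G1 with hG2def
  have hG1smooth : ContDiffOn ℝ (⊤ : ℕ∞) G1 V := hGsmooth.deriv_of_isOpen hVopen (by simp)
  have hG1 : ∀ u ∈ V, HasDerivAt (g t) (G1 u) u := fun u hu =>
    ((hGsmooth.contDiffAt (hVopen.mem_nhds hu)).differentiableAt (by simp)).hasDerivAt
  have hG2 : ∀ u ∈ V, HasDerivAt G1 (G2 u) u := fun u hu =>
    ((hG1smooth.contDiffAt (hVopen.mem_nhds hu)).differentiableAt (by simp)).hasDerivAt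
  have hGc : ContinuousOn (g t) (Set.Icc 0 1) := hGsmooth.continuousOn.mono hVIcc
  have hG1c : ContinuousOn G1 (Set.Icc 0 1) := hG1smooth.continuousOn.mono hVIcc
  have hG2c : ContinuousOn G2 (Set.Icc 0 1) :=
    (ContDiffOn.deriv_of_isOpen (m := (⊤ : ℕ∞)) hG1smooth hVopen (by simp)).continuousOn.mono hVIcc
  -- the time derivative as a continuous function
  set D : ℝ × ℝ → ℝ := fun p => fderiv ℝ (Function.uncurry g) p (1, 0) with hD
  have hDc : ContinuousOn D U := by
    have h1 : ContinuousOn (fderiv ℝ (Function.uncurry g)) U :=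
      hg.continuousOn_fderiv_of_isOpen hU (by simp)
    exact (ContinuousLinearMap.apply ℝ ℝ ((1:ℝ), (0:ℝ))).continuous.comp_continuousOn h1
  have hDd : ∀ p ∈ U, HasDerivAt (fun s => g s p.2) (D p) p.1 := by
    intro p hp
    have h1 : DifferentiableAt ℝ (Function.uncurry g) p :=
      (hg.contDiffAt (hU.mem_nhds hp)).differentiableAt (by simp)
    have h2 : HasDerivAt (fun s : ℝ => (s, p.2)) ((1:ℝ), (0:ℝ)) p.1 :=
      (hasDerivAt_id p.1).prodMk (hasDerivAt_const p.1 p.2)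
    exact h1.hasFDerivAt.comp_hasDerivAt p.1 h2
  have hDtc : ContinuousOn (fun u => D (t, u)) (Set.Icc 0 1) :=
    hDc.comp (Continuous.prodMk_right t).continuousOn (fun u hu => hVIcc hu)
  -- a uniform neighborhood of the slice inside U
  have hK : IsCompact (({t} : Set ℝ) ×ˢ Set.Icc (0:ℝ) 1) := isCompact_singleton.prod isCompact_Icc
  have hKU : ({t} : Set ℝ) ×ˢ Set.Icc (0:ℝ) 1 ⊆ U := fun p hp => by
    have h1 : p.1 = t := hp.1
    exact hUs ⟨by rw [Set.mem_Ici, h1]; exact le_of_lt ht, hp.2⟩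
  obtain ⟨ε, hε, hεU⟩ := hK.exists_cthickening_subset_open hU hKU
  have hCU : Metric.closedBall t ε ×ˢ Set.Icc (0:ℝ) 1 ⊆ U := by
    intro p hp
    apply hεU
    refine Metric.mem_cthickening_of_dist_le p (t, p.2) ε (({t} : Set ℝ) ×ˢ Set.Icc (0:ℝ) 1) ⟨rfl, hp.2⟩ ?_
    rw [Prod.dist_eq]
    simp only [dist_self]
    rw [max_le_iff]
    exact ⟨Metric.mem_closedBall.1 hp.1, le_of_lt hε⟩
  -- Step A : derivative in t under the integral
  have hA : ∀ l : ℝ, HasDerivAt (fun s => φ s l)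
      (∫ u in (0:ℝ)..1, Real.exp (l*u) * (D (t,u) * (1-u)^(M+1))) t := by
    intro l
    have hφfun : (fun s => φ s l) =
        fun s => ∫ u in (0:ℝ)..1, Real.exp (l*u) * (g s u * (1-u)^(M+1)) :=
      funext fun s => hφ s l
    rw [hφfun]
    have hcomp : IsCompact (Metric.closedBall t ε ×ˢ Set.Icc (0:ℝ) 1) :=
      (isCompact_closedBall t ε).prod isCompact_Icc
    have hF'c : ContinuousOn (fun p : ℝ × ℝ => Real.exp (l * p.2) * (D p * (1 - p.2)^(M+1)))
        (Metric.closedBall t ε ×ˢ Set.Icc (0:ℝ) 1) := by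
      apply ContinuousOn.mul
      · fun_prop
      · exact (hDc.mono hCU).mul (by fun_prop)
    obtain ⟨C, hC⟩ := hcomp.exists_bound_of_continuousOn hF'c
    have hgcont : ∀ s ∈ Metric.closedBall t ε,
        ContinuousOn (fun u => g s u) (Set.Icc (0:ℝ) 1) := by
      intro s hs
      have h1 : ContinuousOn (Function.uncurry g) U := hg.continuousOn
      exact h1.comp (Continuous.prodMk_right s).continuousOn (fun u hu => hCU ⟨hs, hu⟩)
    have key := intervalIntegral.hasDerivAt_integral_of_dominated_loc_of_deriv_le
      (F := fun s u => Real.exp (l*u) * (g s u * (1-u)^(M+1)))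
      (F' := fun s u => Real.exp (l*u) * (D (s,u) * (1-u)^(M+1)))
      (bound := fun _ => C) (a := 0) (b := 1) (x₀ := t) (s := Metric.ball t ε) (μ := volume) (Metric.ball_mem_nhds t hε) ?_ ?_ ?_ ?_ ?_ ?_
    · exact key.2
    · have hball : Metric.ball t ε ∈ nhds t := Metric.ball_mem_nhds t hε
      filter_upwards [hball] with s hs
      rw [Set.uIoc_of_le zero_le_one]
      apply ContinuousOn.aestronglyMeasurable _ measurableSet_Ioc
      apply ContinuousOn.mono _ Set.Ioc_subset_Icc_self
      have h2 := hgcont s (Metric.ball_subset_closedBall hs)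
      fun_prop
    · apply ContinuousOn.intervalIntegrable
      rw [Set.uIcc_of_le zero_le_one]
      have h2 := hgcont t (Metric.mem_closedBall_self (le_of_lt hε))
      fun_prop
    · rw [Set.uIoc_of_le zero_le_one]
      apply ContinuousOn.aestronglyMeasurable _ measurableSet_Ioc
      apply ContinuousOn.mono _ Set.Ioc_subset_Icc_self
      exact ((Real.continuous_exp.comp (continuous_const.mul continuous_id)).continuousOn).mul
        (hDtc.mul (by fun_prop))
    · filter_upwards with u hu x hx
      exact hC (x, u) ⟨Metric.ball_subset_closedBall hx,
        Set.Ioc_subset_Icc_self (by rwa [Set.uIoc_of_le zero_le_one] at hu)⟩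
    · exact intervalIntegrable_const
    · filter_upwards with u hu x hx
      have hxu : (x, u) ∈ U := hCU ⟨Metric.ball_subset_closedBall hx,
        Set.Ioc_subset_Icc_self (by rwa [Set.uIoc_of_le zero_le_one] at hu)⟩
      have h1 := hDd (x, u) hxu
      exact (h1.mul_const ((1-u)^(M+1))).const_mul (Real.exp (l*u))
  -- Step B : derivatives in l
  have hcontc : ContinuousOn (fun u : ℝ => g t u * (1-u)^(M+1)) (Set.Icc 0 1) := by fun_prop
  have hφt : φ t = fun l => ∫ u in (0:ℝ)..1, Real.exp (l*u) * (g t u * (1-u)^(M+1)) :=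
    funext fun l => hφ t l
  have hB1 : deriv (φ t) =
      fun l => ∫ u in (0:ℝ)..1, Real.exp (l*u) * (u * (g t u * (1-u)^(M+1))) := by
    funext l
    rw [hφt]
    exact (lap_hasDerivAt _ hcontc l).deriv
  have hB2 : ∀ l, deriv (deriv (φ t)) l =
      ∫ u in (0:ℝ)..1, Real.exp (l*u) * (u * (u * (g t u * (1-u)^(M+1)))) := by
    intro l
    rw [hB1]
    exact (lap_hasDerivAt _ (by fun_prop) l).deriv
  -- Step C : integration by parts (two exact derivatives)
  have hFTC1 : ∀ l : ℝ, (∫ u in (0:ℝ)..1, Real.exp (l*u) *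
      ((l*(u*(1-u)) + (1 - ((M:ℝ)+3)*u)) * (g t u * (1-u)^(M+1))
        + (u*(1-u)) * ((1-u)^(M+1) * G1 u))) = 0 := by
    intro l
    have hd : ∀ x ∈ Set.uIcc (0:ℝ) 1,
        HasDerivAt (fun u => Real.exp (l*u) * (u * (1-u)^(M+2) * g t u))
          (Real.exp (l*x) * ((l*(x*(1-x)) + (1 - ((M:ℝ)+3)*x)) * (g t x * (1-x)^(M+1))
            + (x*(1-x)) * ((1-x)^(M+1) * G1 x))) x := by
      intro x hx
      have hxV : x ∈ V := hVIcc (by rwa [Set.uIcc_of_le zero_le_one] at hx)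
      have h1 : HasDerivAt (fun u : ℝ => Real.exp (l*u)) (Real.exp (l*x) * l) x := by
        have h0 : HasDerivAt (fun u : ℝ => l * u) l x := by
          simpa using (hasDerivAt_id x).const_mul l
        simpa using h0.exp
      have h2 := (hasDerivAt_id x).mul
        (((hasDerivAt_const x (1:ℝ)).sub (hasDerivAt_id x)).pow (M+2))
      have h3 := h2.mul (hG1 x hxV)
      have h4 := h1.mul h3
      refine h4.congr_deriv ?_
      simp only [Pi.mul_apply, Pi.pow_apply, Pi.sub_apply, id_eq]
      push_cast [show M+2-1 = M+1 from rfl]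
      ring
    have hint : IntervalIntegrable (fun x => Real.exp (l*x) *
        ((l*(x*(1-x)) + (1 - ((M:ℝ)+3)*x)) * (g t x * (1-x)^(M+1))
          + (x*(1-x)) * ((1-x)^(M+1) * G1 x))) volume 0 1 := by
      apply ContinuousOn.intervalIntegrable
      rw [Set.uIcc_of_le zero_le_one]
      fun_prop
    rw [intervalIntegral.integral_eq_sub_of_hasDerivAt hd hint]
    norm_num
  have hFTC2 : ∀ l : ℝ, (∫ u in (0:ℝ)..1, Real.exp (l*u) *
      ((l*(u*(1-u)) + (1 - ((M:ℝ)+3)*u)) * ((1-u)^(M+1) * G1 u)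
        + (u*(1-u)) * ((1-u)^(M+1) * G2 u))) = 0 := by
    intro l
    have hd : ∀ x ∈ Set.uIcc (0:ℝ) 1,
        HasDerivAt (fun u => Real.exp (l*u) * (u * (1-u)^(M+2) * G1 u))
          (Real.exp (l*x) * ((l*(x*(1-x)) + (1 - ((M:ℝ)+3)*x)) * ((1-x)^(M+1) * G1 x)
            + (x*(1-x)) * ((1-x)^(M+1) * G2 x))) x := by
      intro x hx
      have hxV : x ∈ V := hVIcc (by rwa [Set.uIcc_of_le zero_le_one] at hx)
      have h1 : HasDerivAt (fun u : ℝ => Real.exp (l*u)) (Real.exp (l*x) * l) x := by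
        have h0 : HasDerivAt (fun u : ℝ => l * u) l x := by
          simpa using (hasDerivAt_id x).const_mul l
        simpa using h0.exp
      have h2 := (hasDerivAt_id x).mul
        (((hasDerivAt_const x (1:ℝ)).sub (hasDerivAt_id x)).pow (M+2))
      have h3 := h2.mul (hG2 x hxV)
      have h4 := h1.mul h3
      refine h4.congr_deriv ?_
      simp only [Pi.mul_apply, Pi.pow_apply, Pi.sub_apply, id_eq]
      push_cast [show M+2-1 = M+1 from rfl]
      ring
    have hint : IntervalIntegrable (fun x => Real.exp (l*x) *
        ((l*(x*(1-x)) + (1 - ((M:ℝ)+3)*x)) * ((1-x)^(M+1) * G1 x)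
          + (x*(1-x)) * ((1-x)^(M+1) * G2 x))) volume 0 1 := by
      apply ContinuousOn.intervalIntegrable
      rw [Set.uIcc_of_le zero_le_one]
      fun_prop
    rw [intervalIntegral.integral_eq_sub_of_hasDerivAt hd hint]
    norm_num
  -- Step D : the Laplace transform of q vanishes
  set q : ℝ → ℝ := fun u => (1-u)^(M+1) *
      (D (t,u) - (u*(1-u)*G2 u + (1 - ((M:ℝ)+3)*u)*G1 u)) with hq
  have hqc : ContinuousOn q (Set.Icc 0 1) := by
    apply ContinuousOn.mul
    · fun_prop
    · exact hDtc.sub (by fun_prop)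
  have hii : ∀ F : ℝ → ℝ, ContinuousOn F (Set.Icc 0 1) → IntervalIntegrable F volume 0 1 := by
    intro F hF
    apply ContinuousOn.intervalIntegrable
    rwa [Set.uIcc_of_le zero_le_one]
  have hlap : ∀ l : ℝ, ∫ u in (0:ℝ)..1, Real.exp (l*u) * q u = 0 := by
    intro l
    have hexpc : Continuous (fun u : ℝ => Real.exp (l*u)) :=
      Real.continuous_exp.comp (continuous_const.mul continuous_id)
    have hintA : IntervalIntegrable
        (fun u => Real.exp (l*u) * (D (t,u) * (1-u)^(M+1))) volume 0 1 :=
      hii _ (hexpc.continuousOn.mul (hDtc.mul (by fun_prop)))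
    have hintB : IntervalIntegrable (fun u => Real.exp (l*u) *
        ((u*(1-u)) * ((1-u)^(M+1) * G2 u)
          + (1 - ((M:ℝ)+3)*u) * ((1-u)^(M+1) * G1 u))) volume 0 1 :=
      hii _ (by fun_prop)
    -- the pde evaluated via step A and step B
    have hAd := (hA l).deriv
    rw [hpde t ht l] at hAd
    rw [hB2 l] at hAd
    simp only [hB1] at hAd
    rw [hφ t l] at hAd
    push_cast at hAd
    -- e3 : relation from hFTC2
    have e3 : l * (∫ u in (0:ℝ)..1, Real.exp (l*u) * ((u*(1-u)) * ((1-u)^(M+1) * G1 u)))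
        + (∫ u in (0:ℝ)..1, Real.exp (l*u) * ((u*(1-u)) * ((1-u)^(M+1) * G2 u)
            + (1 - ((M:ℝ)+3)*u) * ((1-u)^(M+1) * G1 u))) = 0 := by
      rw [← intervalIntegral.integral_const_mul]
      rw [← intervalIntegral.integral_add (hii _ (by fun_prop)) hintB]
      refine Eq.trans ?_ (hFTC2 l)
      apply intervalIntegral.integral_congr
      intro u _
      ring
    -- e4 : relation from hFTC1
    have e4 : (∫ u in (0:ℝ)..1, Real.exp (l*u) *
          ((l*(u*(1-u)) + (1 - ((M:ℝ)+3)*u)) * (g t u * (1-u)^(M+1))))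
        + (∫ u in (0:ℝ)..1, Real.exp (l*u) * ((u*(1-u)) * ((1-u)^(M+1) * G1 u))) = 0 := by
      rw [← intervalIntegral.integral_add (hii _ (by fun_prop)) (hii _ (by fun_prop))]
      refine Eq.trans ?_ (hFTC1 l)
      apply intervalIntegral.integral_congr
      intro u _
      ring
    -- e5 : expanding the pde right-hand side
    have e5 : l * (∫ u in (0:ℝ)..1, Real.exp (l*u) *
          ((l*(u*(1-u)) + (1 - ((M:ℝ)+3)*u)) * (g t u * (1-u)^(M+1))))
        = l * (∫ u in (0:ℝ)..1, Real.exp (l*u) * (g t u * (1-u)^(M+1)))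
          + (l^2 - ((M:ℝ)+3)*l) * (∫ u in (0:ℝ)..1, Real.exp (l*u) * (u * (g t u * (1-u)^(M+1))))
          - l^2 * (∫ u in (0:ℝ)..1, Real.exp (l*u) * (u * (u * (g t u * (1-u)^(M+1))))) := by
      rw [← intervalIntegral.integral_const_mul, ← intervalIntegral.integral_const_mul,
        ← intervalIntegral.integral_const_mul, ← intervalIntegral.integral_const_mul]
      rw [← intervalIntegral.integral_add (hii _ (by fun_prop)) (hii _ (by fun_prop))]
      rw [← intervalIntegral.integral_sub (hii _ (by fun_prop)) (hii _ (by fun_prop))]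
      apply intervalIntegral.integral_congr
      intro u _
      ring
    -- e6 : splitting the integral of q
    have e6 : (∫ u in (0:ℝ)..1, Real.exp (l*u) * q u)
        = (∫ u in (0:ℝ)..1, Real.exp (l*u) * (D (t,u) * (1-u)^(M+1)))
          - (∫ u in (0:ℝ)..1, Real.exp (l*u) * ((u*(1-u)) * ((1-u)^(M+1) * G2 u)
              + (1 - ((M:ℝ)+3)*u) * ((1-u)^(M+1) * G1 u))) := by
      rw [← intervalIntegral.integral_sub hintA hintB]
      apply intervalIntegral.integral_congr
      intro u _
      simp only [hq]
      ring
    linear_combination e6 - hAd - e3 + l * e4 - e5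
  -- Step E : conclude
  have hq0 : q u₀ = 0 := lap_zero q hqc hlap u₀ hu₀
  have hpow : ((1:ℝ) - u₀)^(M+1) ≠ 0 := pow_ne_zero _ (by linarith [hu₀.2])
  have hfin : D (t, u₀) = u₀*(1-u₀)*G2 u₀ + (1 - ((M:ℝ)+3)*u₀)*G1 u₀ := by
    rcases mul_eq_zero.1 hq0 with h1 | h1
    · exact absurd h1 hpow
    · linarith [sub_eq_zero.1 h1]
  have hder : deriv (fun s => g s u₀) t = D (t, u₀) :=
    (hDd (t, u₀) (hVIcc ⟨le_of_lt hu₀.1, le_of_lt hu₀.2⟩)).deriv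
  rw [hder, hfin]
  push_cast
  ring
end

section
/- Let N ≥ 3 be an integer and let 0 ≤ j ≤ n be integers. Define Q(u_1,u_2) = (1-u_1)^j · P_{n-j}^{(N-2+2j,0)}(2u_1 - 1) · P_j^{(N-3,0)}(2u_2/(1-u_1) − 1) for (u_1,u_2) in the open simplex Σ_2 = {u_1 > 0, u_2 > 0, u_1+u_2 < 1}. Then ∫_{Σ_2} Q(u_1,u_2)² (1-u_1-u_2)^{N-3} du_1 du_2 = 1/((2n+N-1)(2j+N-2)). -/
/-!
Fix `x = u₁` and integrate over the fibre `0 < y < 1 - x` first: with `y = (1 - x) t` the inner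
integral is `(1 - x) ^ (2j + N - 2)` times the one-variable norm of `P_j^{(N-3,0)}`, and the outer
integral is then the one-variable norm of `P_{n-j}^{(N-2+2j,0)}`.

The one-variable norm `∫₀¹ P(x)² (1-x)^α dx = 1/(2m+α+1)`, where `P(x) = P_m^{(α,0)}(2x-1)`,
comes from orthogonality. Expanding `P(x) = ∑ₖ C(m+α,k) C(m,k) (x-1)^(m-k) x^k` and using Beta
integrals, the moment `∫₀¹ P(x) x^r (1-x)^α dx` is `(m+α)!/(m+r+α+1)!` times the `m`-th forward
difference at `0` of `k ↦ (k+1)⋯(k+r)`, a monic polynomial of degree `r`. It therefore vanishes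
for `r < m` and is `(m+α)! m!/(2m+α+1)!` for `r = m`; with the leading coefficient `C(2m+α, m)`
of `P` this gives `1/(2m+α+1)`.
-/
open MeasureTheory

open Polynomial Finset Nat

theorem integral_pow_mul_one_sub_pow (a b : ℕ) :
    ∫ x in (0 : ℝ)..1, x ^ a * (1 - x) ^ b = (a ! * b ! : ℝ) / (a + b + 1)! := by
  have h := Complex.Gamma_mul_Gamma_eq_betaIntegral (s := a + 1) (t := b + 1)
    (by simp; positivity) (by simp; positivity)
  rw [show (a + 1 + (b + 1) : ℂ) = ((a + b + 1 : ℕ) : ℂ) + 1 by push_cast; ring,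
    Complex.Gamma_nat_eq_factorial, Complex.Gamma_nat_eq_factorial,
    Complex.Gamma_nat_eq_factorial, Complex.betaIntegral] at h
  simp only [add_sub_cancel_right, Complex.cpow_natCast] at h
  rw [eq_div_iff (by positivity), mul_comm, ← Complex.ofReal_inj, Complex.ofReal_mul,
    ← intervalIntegral.integral_ofReal]
  push_cast
  exact h.symm

theorem Polynomial.fwdDiff_iter_eval_eq_factorial_mul_coeff {R : Type*} [CommRing R] (P : R[X])
    {n : ℕ} (hP : P.natDegree ≤ n) : (fwdDiff 1)^[n] P.eval = fun _ ↦ n ! * P.coeff n := by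
  rcases hP.lt_or_eq with hlt | rfl
  · rw [fwdDiff_iter_eq_zero_of_degree_lt hlt, coeff_eq_zero_of_natDegree_lt hlt, mul_zero]
    rfl
  · rw [fwdDiff_iter_degree_eq_factorial]
    ext x
    simp [mul_comm]

theorem Polynomial.sum_range_neg_one_pow_mul_choose_mul_eval {R : Type*} [CommRing R] (P : R[X])
    {n : ℕ} (hP : P.natDegree ≤ n) :
    ∑ k ∈ range (n + 1), (-1) ^ (n - k) * n.choose k * P.eval (k : R) = n ! * P.coeff n := by
  have h := congr_fun (P.fwdDiff_iter_eval_eq_factorial_mul_coeff hP) 0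
  rw [fwdDiff_iter_eq_sum_shift] at h
  simpa [zsmul_eq_mul] using h

noncomputable def shiftedJacobi (α m : ℕ) : ℝ[X] :=
  ∑ k ∈ range (m + 1),
    C (((m + α).choose k * m.choose k : ℕ) : ℝ) * ((X - 1) ^ (m - k) * X ^ k)

theorem isMonicOfDegree_X_sub_one_pow_mul_X_pow {R : Type*} [CommRing R] [Nontrivial R]
    {m k : ℕ} (hk : k ≤ m) : IsMonicOfDegree ((X - 1 : R[X]) ^ (m - k) * X ^ k) m := by
  have h := ((isMonicOfDegree_X_sub_one (1 : R)).pow (m - k)).mul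
    (isMonicOfDegree_X_pow (R := R) k)
  rwa [C_1, one_mul, Nat.sub_add_cancel hk] at h

theorem eval_shiftedJacobi (α m : ℕ) (x : ℝ) :
    (shiftedJacobi α m).eval x = jacobiP α 0 m (2 * x - 1) := by
  rw [shiftedJacobi, jacobiP, eval_finsetSum, ← sum_range_reflect]
  refine sum_congr rfl fun k hk => ?_
  have hk : k ≤ m := Nat.lt_succ_iff.mp (mem_range.mp hk)
  rw [Nat.add_sub_cancel, Nat.sub_sub_self hk, Nat.choose_symm hk, add_zero]
  simp only [eval_mul, eval_C, eval_pow, eval_sub, eval_X, eval_one]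
  push_cast
  ring_nf

theorem natDegree_shiftedJacobi_le (α m : ℕ) : (shiftedJacobi α m).natDegree ≤ m :=
  natDegree_sum_le_of_forall_le _ _ fun _ hk => (natDegree_C_mul_le _ _).trans
    (isMonicOfDegree_X_sub_one_pow_mul_X_pow (Nat.lt_succ_iff.mp (mem_range.mp hk))).natDegree_eq.le

theorem coeff_shiftedJacobi (α m : ℕ) :
    (shiftedJacobi α m).coeff m = (2 * m + α).choose m := by
  have hterm : ∀ k ∈ range (m + 1), (C (((m + α).choose k * m.choose k : ℕ) : ℝ) *
      ((X - 1) ^ (m - k) * X ^ k)).coeff m =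
        (((m + α).choose k * m.choose (m - k) : ℕ) : ℝ) := by
    intro k hk
    have hk : k ≤ m := Nat.lt_succ_iff.mp (mem_range.mp hk)
    rw [coeff_C_mul, ((isMonicOfDegree_iff _ _).mp (isMonicOfDegree_X_sub_one_pow_mul_X_pow hk)).2,
      mul_one, Nat.choose_symm hk]
  rw [shiftedJacobi, finsetSum_coeff, sum_congr rfl hterm, ← Nat.cast_sum,
    show 2 * m + α = m + α + m by ring, Nat.add_choose_eq,
    Nat.sum_antidiagonal_eq_sum_range_succ (fun i j => (m + α).choose i * m.choose j)]

theorem isMonicOfDegree_ascPochhammer_comp_X_add_one {R : Type*} [CommRing R] [IsDomain R]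
    (r : ℕ) : IsMonicOfDegree ((ascPochhammer R r).comp (X + 1)) r := by
  have h : IsMonicOfDegree (ascPochhammer R r) r :=
    ⟨ascPochhammer_natDegree R r, monic_ascPochhammer R r⟩
  simpa [C_1] using h.comp one_ne_zero (isMonicOfDegree_X_add_one (1 : R))

theorem factorial_mul_eval_ascPochhammer_comp_X_add_one {R : Type*} [CommSemiring R] (k r : ℕ) :
    (k ! : R) * ((ascPochhammer R r).comp (X + 1)).eval (k : R) = (k + r)! := by
  rw [eval_comp, eval_add, eval_X, eval_one, ← Nat.cast_succ,
    ascPochhammer_nat_eq_natCast_ascFactorial, ← Nat.cast_mul, Nat.factorial_mul_ascFactorial]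

theorem integral_shiftedJacobi_mul_pow (α m r : ℕ) (hr : r ≤ m) :
    ∫ x in (0 : ℝ)..1, (shiftedJacobi α m).eval x * x ^ r * (1 - x) ^ α =
      (m + α)! * m ! / (m + r + α + 1)! * ((ascPochhammer ℝ r).comp (X + 1)).coeff m := by
  have hterm : ∀ k ∈ range (m + 1),
      ∫ x in (0 : ℝ)..1, (((m + α).choose k * m.choose k : ℕ) : ℝ) * (-1) ^ (m - k) *
        (x ^ (k + r) * (1 - x) ^ (m - k + α)) =
      (m + α)! / (m + r + α + 1)! * ((-1) ^ (m - k) * m.choose k *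
        ((ascPochhammer ℝ r).comp (X + 1)).eval (k : ℝ)) := by
    intro k hk
    have hk : k ≤ m := Nat.lt_succ_iff.mp (mem_range.mp hk)
    have hchoose : ((m + α).choose k : ℝ) * k ! * (m - k + α)! = (m + α)! := by
      rw [show m - k + α = m + α - k by omega]
      exact_mod_cast Nat.choose_mul_factorial_mul_factorial (by omega : k ≤ m + α)
    rw [intervalIntegral.integral_const_mul, integral_pow_mul_one_sub_pow,
      show k + r + (m - k + α) + 1 = m + r + α + 1 by omega, ← hchoose,
      ← factorial_mul_eval_ascPochhammer_comp_X_add_one k r]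
    push_cast
    field_simp
  have hexpand : ∀ x : ℝ, (shiftedJacobi α m).eval x * x ^ r * (1 - x) ^ α =
      ∑ k ∈ range (m + 1), (((m + α).choose k * m.choose k : ℕ) : ℝ) * (-1) ^ (m - k) *
        (x ^ (k + r) * (1 - x) ^ (m - k + α)) := by
    intro x
    rw [shiftedJacobi, eval_finsetSum, sum_mul, sum_mul]
    refine sum_congr rfl fun k _ => ?_
    simp only [eval_mul, eval_C, eval_pow, eval_sub, eval_X, eval_one]
    rw [show x - 1 = -1 * (1 - x) by ring, mul_pow, pow_add, pow_add]
    ring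
  simp_rw [hexpand]
  rw [intervalIntegral.integral_finsetSum fun k _ =>
      (by fun_prop : Continuous _).intervalIntegrable _ _, sum_congr rfl hterm, ← mul_sum,
    sum_range_neg_one_pow_mul_choose_mul_eval _
      ((isMonicOfDegree_ascPochhammer_comp_X_add_one r).natDegree_eq.trans_le hr)]
  ring

theorem integral_jacobiP_sq_mul_one_sub_pow (α m : ℕ) :
    ∫ x in (0 : ℝ)..1, jacobiP α 0 m (2 * x - 1) ^ 2 * (1 - x) ^ α =
      1 / (2 * m + α + 1 : ℝ) := by
  set P := shiftedJacobi α m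
  have hexpand : ∀ x : ℝ, jacobiP α 0 m (2 * x - 1) ^ 2 * (1 - x) ^ α =
      ∑ r ∈ range (m + 1), P.coeff r * (P.eval x * x ^ r * (1 - x) ^ α) := by
    intro x
    rw [← eval_shiftedJacobi, sq]
    nth_rw 1 [eval_eq_sum_range' (Nat.lt_succ_of_le (natDegree_shiftedJacobi_le α m))]
    rw [sum_mul, sum_mul]
    exact sum_congr rfl fun r _ => by ring
  have hlower : ∀ r ∈ range (m + 1), r ≠ m →
      P.coeff r * ∫ x in (0 : ℝ)..1, P.eval x * x ^ r * (1 - x) ^ α = 0 := by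
    intro r hr hrm
    have hr : r < m := lt_of_le_of_ne (Nat.lt_succ_iff.mp (mem_range.mp hr)) hrm
    rw [integral_shiftedJacobi_mul_pow α m r hr.le, coeff_eq_zero_of_natDegree_lt
      ((isMonicOfDegree_ascPochhammer_comp_X_add_one r).natDegree_eq.trans_lt hr)]
    ring
  have htop : ((ascPochhammer ℝ m).comp (X + 1)).coeff m = 1 :=
    ((isMonicOfDegree_iff _ _).mp (isMonicOfDegree_ascPochhammer_comp_X_add_one m)).2
  have hchoose : ((2 * m + α).choose m : ℝ) * m ! * (m + α)! = (2 * m + α)! := by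
    rw [show m + α = 2 * m + α - m by omega]
    exact_mod_cast Nat.choose_mul_factorial_mul_factorial (by omega : m ≤ 2 * m + α)
  simp_rw [hexpand]
  rw [intervalIntegral.integral_finsetSum fun r _ =>
    (by fun_prop : Continuous _).intervalIntegrable _ _]
  simp_rw [intervalIntegral.integral_const_mul]
  rw [sum_eq_single_of_mem m (self_mem_range_succ m) hlower,
    integral_shiftedJacobi_mul_pow α m m le_rfl, htop, coeff_shiftedJacobi,
    show m + m + α + 1 = 2 * m + α + 1 by ring, Nat.factorial_succ, Nat.cast_mul, ← hchoose]
  have hpos : ((2 * m + α).choose m : ℝ) ≠ 0 := mod_cast (Nat.choose_pos (by omega)).ne'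
  push_cast
  field_simp

theorem integral_jacobiP_sq_mul_sub_pow (β j : ℕ) (c : ℝ) :
    ∫ y in (0 : ℝ)..c, jacobiP β 0 j (2 * y / c - 1) ^ 2 * (c - y) ^ β =
      c ^ (β + 1) / (2 * j + β + 1) := by
  rcases eq_or_ne c 0 with rfl | hc
  · simp
  have hscale : ∀ y : ℝ, jacobiP β 0 j (2 * y / c - 1) ^ 2 * (c - y) ^ β =
      c ^ β * (jacobiP β 0 j (2 * (y / c) - 1) ^ 2 * (1 - y / c) ^ β) := by
    intro y
    rw [mul_div_assoc, mul_left_comm, ← mul_pow, mul_one_sub, mul_div_cancel₀ y hc]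
  simp_rw [hscale]
  rw [intervalIntegral.integral_const_mul,
    intervalIntegral.integral_comp_div (fun t => jacobiP β 0 j (2 * t - 1) ^ 2 * (1 - t) ^ β) hc,
    zero_div, div_self hc, integral_jacobiP_sq_mul_one_sub_pow, smul_eq_mul]
  ring

theorem pow_mul_jacobiP_two_mul_div_sub_one (α β n : ℕ) {c : ℝ} (hc : c ≠ 0) (y : ℝ) :
    c ^ n * jacobiP α β n (2 * y / c - 1) =
      ∑ m ∈ range (n + 1), ((n + α).choose (n - m) : ℝ) * (n + β).choose m *
        (y - c) ^ m * y ^ (n - m) := by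
  rw [jacobiP, mul_sum]
  refine sum_congr rfl fun m hm => ?_
  have hsplit : c ^ n = c ^ m * c ^ (n - m) := by
    rw [← pow_add, Nat.add_sub_cancel' (Nat.lt_succ_iff.mp (mem_range.mp hm))]
  rw [show (2 * y / c - 1 - 1) / 2 = (y - c) / c by field_simp; ring,
    show (2 * y / c - 1 + 1) / 2 = y / c by field_simp; ring, div_pow, div_pow, hsplit]
  field_simp

theorem MeasureTheory.setIntegral_prod_eq_integral_setIntegral_preimage_prodMk
    {α β E : Type*} [MeasurableSpace α] [MeasurableSpace β] [NormedAddCommGroup E]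
    [NormedSpace ℝ E] {μ : Measure α} {ν : Measure β} [SFinite μ] [SFinite ν]
    {s : Set (α × β)} (hs : MeasurableSet s) {f : α × β → E}
    (hf : IntegrableOn f s (μ.prod ν)) :
    ∫ p in s, f p ∂μ.prod ν = ∫ x, ∫ y in Prod.mk x ⁻¹' s, f (x, y) ∂ν ∂μ := by
  rw [← integral_indicator hs, integral_prod _ ((integrable_indicator_iff hs).mpr hf)]
  congr 1 with x
  rw [← integral_indicator (measurable_prodMk_left hs)]
  rfl

theorem setIntegral_simplex_eq_integral_integral {f : ℝ × ℝ → ℝ}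
    (hf : IntegrableOn f {p : ℝ × ℝ | 0 < p.1 ∧ 0 < p.2 ∧ p.1 + p.2 < 1}) :
    ∫ p in {p : ℝ × ℝ | 0 < p.1 ∧ 0 < p.2 ∧ p.1 + p.2 < 1}, f p =
      ∫ x in (0 : ℝ)..1, ∫ y in (0 : ℝ)..(1 - x), f (x, y) := by
  have hS : MeasurableSet {p : ℝ × ℝ | 0 < p.1 ∧ 0 < p.2 ∧ p.1 + p.2 < 1} := by
    measurability
  rw [Measure.volume_eq_prod] at hf ⊢
  rw [setIntegral_prod_eq_integral_setIntegral_preimage_prodMk hS hf,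
    intervalIntegral.integral_of_le zero_le_one]
  have hsection : ∀ x : ℝ,
      Prod.mk x ⁻¹' {p : ℝ × ℝ | 0 < p.1 ∧ 0 < p.2 ∧ p.1 + p.2 < 1} =
        if 0 < x then Set.Ioo 0 (1 - x) else ∅ := by
    intro x
    ext y
    split_ifs with hx <;> simp [hx, lt_sub_iff_add_lt']
  rw [← setIntegral_eq_integral_of_forall_compl_eq_zero (s := Set.Ioc 0 1)]
  · refine setIntegral_congr_fun measurableSet_Ioc fun x ⟨hx0, hx1⟩ => ?_
    rw [hsection, if_pos hx0, intervalIntegral.integral_of_le (by linarith),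
      integral_Ioc_eq_integral_Ioo]
  · intro x hx
    rw [hsection]
    split_ifs with hx0
    · rw [Set.Ioo_eq_empty (by simp at hx; linarith [hx hx0]), Measure.restrict_empty,
        integral_zero_measure]
    · rw [Measure.restrict_empty, integral_zero_measure]

theorem integrableOn_simplex_jacobi_sq (a b m j : ℕ) :
    IntegrableOn (fun u : ℝ × ℝ => ((1 - u.1) ^ j * jacobiP a 0 m (2 * u.1 - 1) *
        jacobiP b 0 j (2 * u.2 / (1 - u.1) - 1)) ^ 2 * (1 - u.1 - u.2) ^ b)
      {p : ℝ × ℝ | 0 < p.1 ∧ 0 < p.2 ∧ p.1 + p.2 < 1} := by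
  -- on the simplex, the factor `(1 - u₁) ^ j` clears the denominator of the second Jacobi factor
  set F : ℝ × ℝ → ℝ := fun u => (jacobiP a 0 m (2 * u.1 - 1) *
      ∑ k ∈ range (j + 1), ((j + b).choose (j - k) : ℝ) * j.choose k *
        (u.2 - (1 - u.1)) ^ k * u.2 ^ (j - k)) ^ 2 * (1 - u.1 - u.2) ^ b
  have hF : Continuous F := by
    have : Continuous (jacobiP a 0 m) := by unfold jacobiP; fun_prop
    fun_prop
  have hsub : {p : ℝ × ℝ | 0 < p.1 ∧ 0 < p.2 ∧ p.1 + p.2 < 1} ⊆ Set.Icc 0 1 := by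
    rintro ⟨x, y⟩ ⟨hx, hy, hxy⟩
    exact ⟨⟨hx.le, hy.le⟩, ⟨by dsimp; linarith, by dsimp; linarith⟩⟩
  refine (hF.integrableOn_Icc.mono_set hsub).congr_fun
    (fun u ⟨hx, hy, hxy⟩ => ?_) (by measurability)
  simp only [F]
  rw [mul_right_comm, pow_mul_jacobiP_two_mul_div_sub_one b 0 j (by linarith : 1 - u.1 ≠ 0),
    add_zero]
  ring

theorem integral_simplex_jacobi_sq (a b m j : ℕ) (hab : a = 2 * j + b + 1) :
    ∫ u in {p : ℝ × ℝ | 0 < p.1 ∧ 0 < p.2 ∧ p.1 + p.2 < 1},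
        ((1 - u.1) ^ j * jacobiP a 0 m (2 * u.1 - 1) *
          jacobiP b 0 j (2 * u.2 / (1 - u.1) - 1)) ^ 2 * (1 - u.1 - u.2) ^ b =
      1 / ((2 * m + a + 1) * (2 * j + b + 1) : ℝ) := by
  have hinner : ∀ x : ℝ, ∫ y in (0 : ℝ)..(1 - x), ((1 - x) ^ j * jacobiP a 0 m (2 * x - 1) *
        jacobiP b 0 j (2 * y / (1 - x) - 1)) ^ 2 * (1 - x - y) ^ b =
      jacobiP a 0 m (2 * x - 1) ^ 2 * (1 - x) ^ a / (2 * j + b + 1) := by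
    intro x
    have hfactor : ∀ y : ℝ, ((1 - x) ^ j * jacobiP a 0 m (2 * x - 1) *
          jacobiP b 0 j (2 * y / (1 - x) - 1)) ^ 2 * (1 - x - y) ^ b =
        (1 - x) ^ (2 * j) * jacobiP a 0 m (2 * x - 1) ^ 2 *
          (jacobiP b 0 j (2 * y / (1 - x) - 1) ^ 2 * (1 - x - y) ^ b) := fun y => by ring
    simp_rw [hfactor]
    rw [intervalIntegral.integral_const_mul, integral_jacobiP_sq_mul_sub_pow, hab]
    ring
  rw [setIntegral_simplex_eq_integral_integral (integrableOn_simplex_jacobi_sq a b m j)]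
  simp_rw [hinner]
  rw [intervalIntegral.integral_div, integral_jacobiP_sq_mul_one_sub_pow]
  field_simp

/-- The squared `L²`-norm of the Jacobi polynomial
`Q_{n-j,j}^{(N)}(u₁,u₂) = (1-u₁)^j P_{n-j}^{(N-2+2j,0)}(2u₁-1) P_j^{(N-3,0)}(2u₂/(1-u₁)-1)`
in the simplex `Σ₂` with respect to `(1-u₁-u₂)^{N-3} du₁ du₂` equals
`1/((2n+N-1)(2j+N-2))`. -/
theorem stmt_15 (N : ℕ) (hN : 3 ≤ N) (n j : ℕ) (hj : j ≤ n) :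
    ∫ u in {p : ℝ × ℝ | 0 < p.1 ∧ 0 < p.2 ∧ p.1 + p.2 < 1},
        ((1 - u.1) ^ j * jacobiP (N - 2 + 2 * j) 0 (n - j) (2 * u.1 - 1) *
            jacobiP (N - 3) 0 j (2 * u.2 / (1 - u.1) - 1)) ^ 2 *
          (1 - u.1 - u.2) ^ (N - 3) =
      1 / ((2 * (n : ℝ) + N - 1) * (2 * (j : ℝ) + N - 2)) := by
  rw [integral_simplex_jacobi_sq _ _ _ _ (by omega), Nat.cast_sub hj, Nat.cast_add,
    Nat.cast_sub (by omega : 2 ≤ N), Nat.cast_sub hN]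
  push_cast
  ring_nf
end
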